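/- Let E be a separable real Banach space. Then for every f in the closed unit ball B_{E*} of the dual space E* there is a sequence (f_n)_{n≥1} of extreme points of B_{E*} such that (f_1+⋯+f_N)/N converges to f in the weak* topology of E*, i.e. for every x ∈ E, (1/N)·Σ_{k=1}^N f_k(x) → f(x) as N → ∞. -/

import Mathlib

open Filter Finset

/-!
By Banach–Alaoglu and Krein–Milman, `f` lies in the weak* closure of the convex hull of the
extreme points of the dual ball. Rounding the weights of a convex combination shows that
averages of finite lists of extreme points are already weak* dense there, and since the
weak* topology is metrizable on the ball of the dual of a separable space, `f` is the weak*
limit of the averages of a sequence of lists `L m`. Concatenating the blocks `L (μ r)`, where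
`μ → ∞` slowly enough that the length of `L (μ r)` is `o(r)`, gives the sequence: each complete
block contributes exactly its length times its average, and the last, incomplete one is
negligible.
-/

open Metric Set Topology

lemma sum_range_length_getD {β M : Type*} [AddCommMonoid M] (l : List β) (φ : β → M) (x₀ : β) :
    ∑ j ∈ range l.length, φ (l.getD j x₀) = (l.map φ).sum := by
  rw [← Fin.sum_univ_fun_getElem, ← Fin.sum_univ_eq_sum_range]
  exact sum_congr rfl fun j _ => by rw [List.getD_eq_getElem _ _ j.isLt]

lemma abs_sum_map_le {β : Type*} {l : List β} {φ : β → ℝ} {C : ℝ}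
    (hC : ∀ x ∈ l, |φ x| ≤ C) : |(l.map φ).sum| ≤ l.length * C := by
  have hlow := List.card_nsmul_le_sum (l.map φ) (-C)
    (by simpa using fun x hx => (abs_le.1 (hC x hx)).1)
  have hup := List.sum_le_card_nsmul (l.map φ) C
    (by simpa using fun x hx => (abs_le.1 (hC x hx)).2)
  simp only [List.length_map, nsmul_eq_mul] at hlow hup
  exact abs_le.2 ⟨by linarith, hup⟩

noncomputable def mapAverage {β : Type*} (φ : β → ℝ) (l : List β) : ℝ :=
  (l.map φ).sum / l.length

lemma abs_mapAverage_le {β : Type*} {l : List β} (hl : l ≠ []) {φ : β → ℝ} {C : ℝ}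
    (hC : ∀ x ∈ l, |φ x| ≤ C) : |mapAverage φ l| ≤ C := by
  have hlen : (0 : ℝ) < l.length := by exact_mod_cast List.length_pos_iff.2 hl
  rw [mapAverage, abs_div, Nat.abs_cast, div_le_iff₀ hlen, mul_comm]
  exact abs_sum_map_le hC

section Flatten

variable {β : Type*} (ℓ : ℕ → List β)

def blockStart (r : ℕ) : ℕ := ∑ i ∈ range r, (ℓ i).length

def blockIndex (n : ℕ) : ℕ := Nat.findGreatest (fun r => blockStart ℓ r ≤ n) n

/-- `x₀` is a junk value, never read when all the lists are nonempty. -/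
def flattenSeq (x₀ : β) (n : ℕ) : β :=
  (ℓ (blockIndex ℓ n)).getD (n - blockStart ℓ (blockIndex ℓ n)) x₀

variable {ℓ}

lemma blockStart_succ (r : ℕ) : blockStart ℓ (r + 1) = blockStart ℓ r + (ℓ r).length :=
  sum_range_succ _ _

lemma blockStart_mono : Monotone (blockStart ℓ) := fun _ _ h =>
  sum_le_sum_of_subset (range_subset_range.2 h)

lemma le_blockStart (hne : ∀ r, ℓ r ≠ []) (r : ℕ) : r ≤ blockStart ℓ r := by
  calc r = ∑ _i ∈ range r, 1 := by simp
    _ ≤ blockStart ℓ r := sum_le_sum fun i _ => List.length_pos_iff.2 (hne i)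

lemma blockStart_blockIndex_le (n : ℕ) : blockStart ℓ (blockIndex ℓ n) ≤ n :=
  Nat.findGreatest_spec (P := fun r => blockStart ℓ r ≤ n) n.zero_le (by simp [blockStart])

lemma le_blockIndex (hne : ∀ r, ℓ r ≠ []) {r n : ℕ} (h : blockStart ℓ r ≤ n) :
    r ≤ blockIndex ℓ n :=
  Nat.le_findGreatest ((le_blockStart hne r).trans h) h

lemma blockIndex_le (n : ℕ) : blockIndex ℓ n ≤ n := Nat.findGreatest_le n

lemma lt_blockStart_blockIndex_succ (hne : ∀ r, ℓ r ≠ []) (n : ℕ) :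
    n < blockStart ℓ (blockIndex ℓ n + 1) := by
  by_contra! h
  have := le_blockIndex hne h
  omega

lemma blockIndex_blockStart_add (hne : ∀ r, ℓ r ≠ []) {r j : ℕ} (hj : j < (ℓ r).length) :
    blockIndex ℓ (blockStart ℓ r + j) = r := by
  refine le_antisymm ?_ (le_blockIndex hne (Nat.le_add_right _ _))
  by_contra! h
  have := (blockStart_mono h).trans (blockStart_blockIndex_le (ℓ := ℓ) (blockStart ℓ r + j))
  rw [blockStart_succ] at this
  omega

lemma tendsto_blockIndex (hne : ∀ r, ℓ r ≠ []) : Tendsto (blockIndex ℓ) atTop atTop :=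
  tendsto_atTop_atTop.2 fun r => ⟨blockStart ℓ r, fun _ => le_blockIndex hne⟩

lemma flattenSeq_blockStart_add (hne : ∀ r, ℓ r ≠ []) (x₀ : β) {r j : ℕ}
    (hj : j < (ℓ r).length) : flattenSeq ℓ x₀ (blockStart ℓ r + j) = (ℓ r).getD j x₀ := by
  simp [flattenSeq, blockIndex_blockStart_add hne hj]

lemma flattenSeq_mem (hne : ∀ r, ℓ r ≠ []) (x₀ : β) (n : ℕ) :
    flattenSeq ℓ x₀ n ∈ ℓ (blockIndex ℓ n) := by
  have h := lt_blockStart_blockIndex_succ hne n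
  rw [blockStart_succ] at h
  have := blockStart_blockIndex_le (ℓ := ℓ) n
  rw [flattenSeq, List.getD_eq_getElem _ _ (by omega)]
  exact List.getElem_mem _

end Flatten

section Cesaro

variable {β : Type*} {ℓ : ℕ → List β} (x₀ : β) {φ : β → ℝ}

lemma sum_range_blockStart_sub_mapAverage (hne : ∀ r, ℓ r ≠ []) (r : ℕ) :
    ∑ k ∈ range (blockStart ℓ r),
      (φ (flattenSeq ℓ x₀ k) - mapAverage φ (ℓ (blockIndex ℓ k))) = 0 := by
  induction r with
  | zero => simp [blockStart]
  | succ r ih =>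
    rw [blockStart_succ, sum_range_add, ih, zero_add]
    have hlen : ((ℓ r).length : ℝ) ≠ 0 := by exact_mod_cast (List.length_pos_iff.2 (hne r)).ne'
    calc ∑ j ∈ range (ℓ r).length, (φ (flattenSeq ℓ x₀ (blockStart ℓ r + j))
          - mapAverage φ (ℓ (blockIndex ℓ (blockStart ℓ r + j))))
        = ∑ j ∈ range (ℓ r).length, (φ ((ℓ r).getD j x₀) - mapAverage φ (ℓ r)) :=
          sum_congr rfl fun j hj => by
            rw [flattenSeq_blockStart_add hne x₀ (mem_range.1 hj),
              blockIndex_blockStart_add hne (mem_range.1 hj)]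
      _ = 0 := by
          rw [sum_sub_distrib, sum_range_length_getD, sum_const, card_range, nsmul_eq_mul,
            mapAverage, mul_div_cancel₀ _ hlen, sub_self]

lemma abs_sum_range_sub_mapAverage_le (hne : ∀ r, ℓ r ≠ []) {C : ℝ}
    (hC : ∀ r, ∀ x ∈ ℓ r, |φ x| ≤ C) (N : ℕ) :
    |∑ k ∈ range N, (φ (flattenSeq ℓ x₀ k) - mapAverage φ (ℓ (blockIndex ℓ k)))|
      ≤ 2 * C * (ℓ (blockIndex ℓ N)).length := by
  have hlt := lt_blockStart_blockIndex_succ hne N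
  have hle := blockStart_blockIndex_le (ℓ := ℓ) N
  rw [blockStart_succ] at hlt
  set r := blockIndex ℓ N
  obtain ⟨j, hNj, hj⟩ : ∃ j, N = blockStart ℓ r + j ∧ j ≤ (ℓ r).length :=
    ⟨N - blockStart ℓ r, by omega, by omega⟩
  rw [hNj, sum_range_add, sum_range_blockStart_sub_mapAverage x₀ hne, zero_add]
  have hterm : ∀ k, |φ (flattenSeq ℓ x₀ k) - mapAverage φ (ℓ (blockIndex ℓ k))| ≤ 2 * C :=
    fun k => (abs_sub _ _).trans (by
      linarith [hC _ _ (flattenSeq_mem hne x₀ k), abs_mapAverage_le (hne _) (hC (blockIndex ℓ k))])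
  have hC0 : 0 ≤ C := (abs_nonneg _).trans (abs_mapAverage_le (hne 0) (hC 0))
  calc _ ≤ ∑ _i ∈ range j, 2 * C :=
        (abs_sum_le_sum_abs _ _).trans (sum_le_sum fun i _ => hterm _)
    _ = j * (2 * C) := by simp
    _ ≤ 2 * C * (ℓ r).length := by rw [mul_comm]; gcongr

theorem tendsto_cesaro_flattenSeq (hne : ∀ r, ℓ r ≠ []) {C c : ℝ}
    (hC : ∀ r, ∀ x ∈ ℓ r, |φ x| ≤ C)
    (havg : Tendsto (fun r => mapAverage φ (ℓ r)) atTop (𝓝 c))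
    (hlen : Tendsto (fun r => ((ℓ r).length : ℝ) / r) atTop (𝓝 0)) :
    Tendsto (fun N : ℕ => (N : ℝ)⁻¹ * ∑ k ∈ range N, φ (flattenSeq ℓ x₀ k)) atTop (𝓝 c) := by
  set a : ℕ → ℝ := fun k => mapAverage φ (ℓ (blockIndex ℓ k))
  have hb := tendsto_blockIndex hne
  have hmain : Tendsto (fun N : ℕ => (N : ℝ)⁻¹ * ∑ k ∈ range N, a k) atTop (𝓝 c) :=
    (havg.comp hb).cesaro
  have herr : Tendsto (fun N : ℕ => (N : ℝ)⁻¹ * ∑ k ∈ range N, (φ (flattenSeq ℓ x₀ k) - a k))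
      atTop (𝓝 0) := by
    have hlim := (hlen.comp hb).const_mul (2 * C)
    rw [mul_zero] at hlim
    refine squeeze_zero_norm' ?_ hlim
    filter_upwards [hb.eventually_ge_atTop 1] with N hN
    have hC0 : 0 ≤ C := (abs_nonneg _).trans (abs_mapAverage_le (hne 0) (hC 0))
    have hbN : (0 : ℝ) < blockIndex ℓ N := by exact_mod_cast hN
    have hNb : (blockIndex ℓ N : ℝ) ≤ N := by exact_mod_cast blockIndex_le N
    rw [norm_mul, norm_inv, Real.norm_natCast, Real.norm_eq_abs,
      inv_mul_le_iff₀ (hbN.trans_le hNb)]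
    refine (abs_sum_range_sub_mapAverage_le x₀ hne hC N).trans ?_
    calc 2 * C * (ℓ (blockIndex ℓ N)).length
        = blockIndex ℓ N * (2 * C * ((ℓ (blockIndex ℓ N)).length / blockIndex ℓ N)) := by
          field_simp
      _ ≤ N * (2 * C * ((ℓ (blockIndex ℓ N)).length / blockIndex ℓ N)) :=
          mul_le_mul_of_nonneg_right hNb (mul_nonneg (by positivity) (by positivity))
  simpa [← mul_add, ← sum_add_distrib] using hmain.add herr

end Cesaro

lemma exists_tendsto_atTop_and_tendsto_div_zero (d : ℕ → ℕ) :
    ∃ μ : ℕ → ℕ, Tendsto μ atTop atTop ∧ Tendsto (fun r => (d (μ r) : ℝ) / r) atTop (𝓝 0) := by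
  set μ : ℕ → ℕ := fun r => Nat.findGreatest (fun m => m * d m ≤ r) r
  have hμ : Tendsto μ atTop atTop := tendsto_atTop_atTop.2 fun M =>
    ⟨M * d M + M, fun r hr => Nat.le_findGreatest (by omega) (by omega)⟩
  refine ⟨μ, hμ, squeeze_zero' (Eventually.of_forall fun r => by positivity) ?_
    (tendsto_inv_atTop_zero.comp (tendsto_natCast_atTop_atTop.comp hμ))⟩
  filter_upwards [hμ.eventually_ge_atTop 1] with r hr
  have hspec : μ r * d (μ r) ≤ r :=
    Nat.findGreatest_spec (P := fun m => m * d m ≤ r) r.zero_le (by simp)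
  have hμr : (0 : ℝ) < μ r := by exact_mod_cast hr
  have hr0 : (0 : ℝ) < r := by exact_mod_cast hr.trans (Nat.findGreatest_le r)
  rw [Function.comp_apply, Function.comp_apply, div_le_iff₀ hr0, inv_mul_eq_div, le_div_iff₀ hμr,
    mul_comm]
  exact_mod_cast hspec

section UniformAverages

variable {V : Type*} [AddCommGroup V] [Module ℝ V]

def uniformAverages (S : Set V) : Set V :=
  {x | ∃ l : List V, l ≠ [] ∧ (∀ v ∈ l, v ∈ S) ∧ (l.length : ℝ)⁻¹ • l.sum = x}

lemma uniformAverages_subset_convexHull (S : Set V) : uniformAverages S ⊆ convexHull ℝ S := by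
  rintro _ ⟨l, hl, hS, rfl⟩
  have h := (univ : Finset (Fin l.length)).centerMass_mem_convexHull (w := fun _ => (1 : ℝ))
    (z := fun i => l[i.1]) (fun _ _ => zero_le_one) (by simpa using List.length_pos_iff.2 hl)
    (fun i _ => hS _ (List.getElem_mem _))
  simpa [Finset.centerMass] using h

/-- Any convex combination `∑ wᵢ zᵢ` is the limit of averages of lists holding
`⌊wᵢ n⌋` copies of each `zᵢ`. -/
theorem convexHull_subset_closure_uniformAverages [TopologicalSpace V] [ContinuousAdd V]
    [ContinuousSMul ℝ V] (S : Set V) : convexHull ℝ S ⊆ closure (uniformAverages S) := by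
  intro g hg
  obtain ⟨ι, _, w, z, hw0, hw1, hz, rfl⟩ := mem_convexHull_iff_exists_fintype.1 hg
  set c : ℕ → ι → ℕ := fun n i => ⌊w i * n⌋₊
  have hc : ∀ i, Tendsto (fun n : ℕ => (c n i : ℝ) / n) atTop (𝓝 (w i)) := fun i =>
    (tendsto_nat_floor_mul_div_atTop (hw0 i)).comp tendsto_natCast_atTop_atTop
  have htot : Tendsto (fun n : ℕ => (∑ i, (c n i : ℝ)) / n) atTop (𝓝 1) := by
    rw [← hw1]
    simpa [sum_div] using tendsto_finsetSum univ fun i _ => hc i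
  have hlim : Tendsto (fun n : ℕ => ((∑ i, (c n i : ℝ)) / n)⁻¹ • ∑ i, ((c n i : ℝ) / n) • z i)
      atTop (𝓝 (∑ i, w i • z i)) := by
    simpa using (htot.inv₀ one_ne_zero).smul
      (tendsto_finsetSum univ fun i _ => (hc i).smul_const (z i))
  refine mem_closure_of_tendsto hlim ?_
  filter_upwards [htot.eventually (lt_mem_nhds zero_lt_one), eventually_ne_atTop 0] with n hpos hn
  set m : Multiset V := ∑ i, Multiset.replicate (c n i) (z i)
  have hcard : (m.card : ℝ) = ∑ i, (c n i : ℝ) := by simp [m, Multiset.card_sum]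
  refine ⟨m.toList, ?_, fun v hv => ?_, ?_⟩
  · rw [Ne, Multiset.toList_eq_nil, ← Multiset.card_eq_zero, ← Nat.cast_eq_zero (R := ℝ), hcard]
    intro h
    simp [h] at hpos
  · obtain ⟨i, -, hi⟩ := Multiset.mem_sum.1 (Multiset.mem_toList.1 hv)
    rw [Multiset.eq_of_mem_replicate hi]
    exact hz i
  · rw [Multiset.length_toList, hcard, Multiset.sum_toList, Multiset.sum_sum]
    simp only [Multiset.sum_replicate, ← Nat.cast_smul_eq_nsmul ℝ, div_eq_inv_mul, ← smul_smul,
      ← smul_sum]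
    rw [smul_smul]
    congr 1
    field_simp

end UniformAverages

lemma exists_seq_tendsto_of_mem_closure_of_subset {X : Type*} [TopologicalSpace X] {K A : Set X}
    [FrechetUrysohnSpace K] (hAK : A ⊆ K) {x : X} (hxK : x ∈ K) (hx : x ∈ closure A) :
    ∃ u : ℕ → X, (∀ n, u n ∈ A) ∧ Tendsto u atTop (𝓝 x) := by
  have hx' : (⟨x, hxK⟩ : K) ∈ closure (((↑) : K → X) ⁻¹' A) := by
    rwa [closure_subtype, Subtype.image_preimage_coe, inter_eq_right.2 hAK]
  obtain ⟨u, hu, hlim⟩ := mem_closure_iff_seq_limit.1 hx'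
  exact ⟨fun n => u n, hu, (continuous_subtype_val.tendsto _).comp hlim⟩

theorem WeakDual.exists_seq_uniformAverages_extremePoints_tendsto {E : Type*}
    [NormedAddCommGroup E] [NormedSpace ℝ E] [TopologicalSpace.SeparableSpace E]
    {K : Set (WeakDual ℝ E)} (hK : IsCompact K) (hKconv : Convex ℝ K) {f : WeakDual ℝ E}
    (hf : f ∈ K) :
    ∃ u : ℕ → WeakDual ℝ E, (∀ n, u n ∈ uniformAverages (K.extremePoints ℝ)) ∧
      Tendsto u atTop (𝓝 f) := by
  have := WeakDual.metrizable_of_isCompact ℝ E K hK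
  -- not found by instance search through the `WeakDual` type synonym
  have : LocallyConvexSpace ℝ (WeakDual ℝ E) := WeakBilin.locallyConvexSpace
  refine exists_seq_tendsto_of_mem_closure_of_subset
    ((uniformAverages_subset_convexHull _).trans (convexHull_min extremePoints_subset hKconv)) hf ?_
  rw [← closure_convexHull_extremePoints hK hKconv] at hf
  simpa using closure_mono (convexHull_subset_closure_uniformAverages _) hf

lemma WeakDual.uniformAverage_apply {E : Type*} [NormedAddCommGroup E] [NormedSpace ℝ E]
    (l : List (WeakDual ℝ E)) (x : E) :
    ((l.length : ℝ)⁻¹ • l.sum) x = mapAverage (fun g => g x) l := by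
  rw [mapAverage, div_eq_inv_mul]
  exact congrArg (_ * ·) (map_list_sum (WeakBilin.eval (topDualPairing ℝ E) x) l)

theorem stmt11_general {E : Type*} [NormedAddCommGroup E] [NormedSpace ℝ E]
    [TopologicalSpace.SeparableSpace E]
    (f : StrongDual ℝ E) (hf : ‖f‖ ≤ 1) :
    ∃ seq : ℕ → StrongDual ℝ E,
      (∀ n, seq n ∈ (Metric.closedBall (0 : StrongDual ℝ E) 1).extremePoints ℝ) ∧
      ∀ x : E,
        Tendsto (fun N : ℕ => (N : ℝ)⁻¹ * ∑ k ∈ Finset.range N, seq k x)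
          atTop (nhds (f x)) := by
  set K : Set (WeakDual ℝ E) := WeakDual.toStrongDual ⁻¹' closedBall 0 1
  have hKconv : Convex ℝ K :=
    (convex_closedBall _ _).linear_preimage (WeakDual.toStrongDual (𝕜 := ℝ) (E := E)).toLinearMap
  obtain ⟨u, hu, hlim⟩ := WeakDual.exists_seq_uniformAverages_extremePoints_tendsto
    (WeakDual.isCompact_closedBall 0 1) hKconv (f := StrongDual.toWeakDual f)
    (by simpa [K] using hf)
  choose L hLne hLext hLu using hu
  obtain ⟨μ, hμ, hlen⟩ := exists_tendsto_atTop_and_tendsto_div_zero fun m => (L m).length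
  have hne : ∀ r, L (μ r) ≠ [] := fun r => hLne _
  -- `K` is the dual ball itself, read through the type synonym `WeakDual ℝ E`
  refine ⟨fun n => WeakDual.toStrongDual (flattenSeq (L ∘ μ) 0 n),
    fun n => hLext _ _ (flattenSeq_mem hne 0 n), fun x => ?_⟩
  refine tendsto_cesaro_flattenSeq 0 hne (φ := fun g => g x) (C := ‖x‖) (fun r g hg => ?_) ?_
    hlen
  · have hg1 : ‖WeakDual.toStrongDual g‖ ≤ 1 := by
      simpa [K] using extremePoints_subset (hLext _ _ hg)
    simpa using (WeakDual.toStrongDual g).le_of_opNorm_le hg1 x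
  · have := ((WeakDual.eval_continuous x).tendsto _).comp (hlim.comp hμ)
    simpa [Function.comp_def, ← hLu, WeakDual.uniformAverage_apply] using this

/-- Let `E` be a separable real Banach space.  For every
`f` in the closed unit ball of the dual `E*` there is a sequence of extreme
points of the ball whose arithmetic means converge to `f` in the weak*
topology, i.e. pointwise on `E`. -/
theorem stmt11 {E : Type*} [NormedAddCommGroup E] [NormedSpace ℝ E] [CompleteSpace E]
    [TopologicalSpace.SeparableSpace E]
    (f : StrongDual ℝ E) (hf : ‖f‖ ≤ 1) :
    ∃ seq : ℕ → StrongDual ℝ E,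
      (∀ n, seq n ∈ (Metric.closedBall (0 : StrongDual ℝ E) 1).extremePoints ℝ) ∧
      ∀ x : E,
        Tendsto (fun N : ℕ => (N : ℝ)⁻¹ * ∑ k ∈ Finset.range N, seq k x)
          atTop (nhds (f x)) :=
  stmt11_general f hf
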